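/- For β ∈ (0,1) define f(ζ;β) := ζ + (8/π)·tan²(πβ/2)·sinh(πζ/2)/( cos(πβ/2) + cosh(πζ/2) ), κ(β) := −(1/2)·sin³(πβ/2)·sec(πβ/2), and γ(β) := −8·sin(πβ/2)·sec³(πβ/2). Then: (i) ∂_ζ f(iβ;β) ≠ 0 and ∂_ζ²f(iβ;β)/∂_ζ f(iβ;β) = πi·κ(β); (ii) cos(πβ) − κ(β)·sin(πβ) = cos⁴(πβ/2) > 0 and γ(β) = −4·sin(πβ)/( cos(πβ) − κ(β)·sin(πβ) ); (iii) f(iβ;β) is purely imaginary with Im f(iβ;β) = β + (4/π)·tan³(πβ/2). -/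

import Mathlib

/-!
Write `fCNK β z = z + a g(k z)` with `g w = sinh w / (c + cosh w)`, `k = π/2`, `c = cos θ`,
`θ = πβ/2`. Because `cosh² - sinh² = 1`, `g' = (c cosh + 1)/(c + cosh)²` and
`g'' = sinh (c² - c cosh - 2)/(c + cosh)³`. At the vortex `k (iβ) = iθ`, where `cosh = cos θ` and
`sinh = i sin θ`, so everything becomes a rational identity in `sin θ, cos θ`:
`f' = 1/cos⁴θ` and `f'' = -π i sin³θ / (2 cos⁵θ)`.
-/

open Set

/-- The conformal map of the explicit zero-gravity solitary wave of
Crowdy–Nelson–Krishnamurthy. -/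
noncomputable def fCNK (β : ℝ) (z : ℂ) : ℂ :=
  z + ((8 / Real.pi * Real.tan (Real.pi * β / 2) ^ 2 : ℝ) : ℂ) *
    Complex.sinh ((Real.pi : ℂ) * z / 2) /
      (((Real.cos (Real.pi * β / 2) : ℝ) : ℂ) + Complex.cosh ((Real.pi : ℂ) * z / 2))

/-- The parameter `κ(β)` of the explicit zero-gravity solitary wave. -/
noncomputable def kappaCNK (β : ℝ) : ℝ :=
  -(1 / 2) * Real.sin (Real.pi * β / 2) ^ 3 / Real.cos (Real.pi * β / 2)

/-- The circulation of the explicit zero-gravity solitary wave. -/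
noncomputable def gammaCNK (β : ℝ) : ℝ :=
  -8 * Real.sin (Real.pi * β / 2) / Real.cos (Real.pi * β / 2) ^ 3

namespace Complex

theorem hasDerivAt_sinh_div_add_cosh {c z : ℂ} (h : c + cosh z ≠ 0) :
    HasDerivAt (fun w => sinh w / (c + cosh w)) ((c * cosh z + 1) / (c + cosh z) ^ 2) z :=
  ((hasDerivAt_sinh z).div ((hasDerivAt_cosh z).const_add c) h).congr_deriv <| by
    linear_combination (1 / (c + cosh z) ^ 2) * cosh_sq_sub_sinh_sq z

theorem hasDerivAt_mul_cosh_add_one_div_sq {c z : ℂ} (h : c + cosh z ≠ 0) :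
    HasDerivAt (fun w => (c * cosh w + 1) / (c + cosh w) ^ 2)
      (sinh z * (c ^ 2 - c * cosh z - 2) / (c + cosh z) ^ 3) z :=
  ((((hasDerivAt_cosh z).const_mul c).add_const 1).div
    (((hasDerivAt_cosh z).const_add c).fun_pow 2) (pow_ne_zero 2 h)).congr_deriv <| by
    field_simp
    ring

theorem hasDerivAt_add_mul_sinh_div_add_cosh {a c k z : ℂ} (h : c + cosh (k * z) ≠ 0) :
    HasDerivAt (fun w => w + a * sinh (k * w) / (c + cosh (k * w)))
      (1 + a * k * ((c * cosh (k * z) + 1) / (c + cosh (k * z)) ^ 2)) z := by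
  have hg := ((hasDerivAt_sinh_div_add_cosh h).comp z ((hasDerivAt_id z).const_mul k)).const_mul a
  simp only [mul_div_assoc]
  exact ((hasDerivAt_id z).add hg).congr_deriv (by simp only [mul_one]; ring)

theorem deriv_deriv_add_mul_sinh_div_add_cosh {a c k z : ℂ} (h : c + cosh (k * z) ≠ 0) :
    deriv (deriv fun w => w + a * sinh (k * w) / (c + cosh (k * w))) z =
      a * k ^ 2 * (sinh (k * z) * (c ^ 2 - c * cosh (k * z) - 2) / (c + cosh (k * z)) ^ 3) := by
  have hnear : ∀ᶠ w in nhds z, c + cosh (k * w) ≠ 0 :=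
    ContinuousAt.eventually_ne (by fun_prop) h
  have hderiv : (deriv fun w => w + a * sinh (k * w) / (c + cosh (k * w))) =ᶠ[nhds z]
      fun w => 1 + a * k * ((c * cosh (k * w) + 1) / (c + cosh (k * w)) ^ 2) :=
    hnear.mono fun w hw => (hasDerivAt_add_mul_sinh_div_add_cosh hw).deriv
  rw [hderiv.deriv_eq]
  exact ((((hasDerivAt_mul_cosh_add_one_div_sq h).comp z
    ((hasDerivAt_id z).const_mul k)).const_mul (a * k)).const_add 1).deriv.trans (by ring)

end Complex

open Complex

theorem fCNK_eq (β : ℝ) :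
    fCNK β = fun z => z + ((8 / Real.pi * Real.tan (Real.pi * β / 2) ^ 2 : ℝ) : ℂ) *
      sinh ((Real.pi : ℂ) / 2 * z) /
        (((Real.cos (Real.pi * β / 2) : ℝ) : ℂ) + cosh ((Real.pi : ℂ) / 2 * z)) := by
  funext z
  rw [fCNK, mul_div_right_comm (Real.pi : ℂ) z 2]

theorem half_pi_mul_I_mul (β : ℝ) :
    (Real.pi : ℂ) / 2 * (I * β) = ((Real.pi * β / 2 : ℝ) : ℂ) * I := by
  push_cast
  ring

theorem fCNK_I_mul (β : ℝ) :
    fCNK β (I * β) = ((β + 4 / Real.pi * Real.tan (Real.pi * β / 2) ^ 3 : ℝ) : ℂ) * I := by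
  rw [fCNK_eq]
  beta_reduce
  rw [half_pi_mul_I_mul, cosh_mul_I, sinh_mul_I, ← ofReal_cos, ← ofReal_sin,
    Real.tan_eq_sin_div_cos]
  generalize Real.sin (Real.pi * β / 2) = s
  generalize Real.cos (Real.pi * β / 2) = c
  push_cast
  field_simp
  ring

section
variable {β : ℝ} (hc : Real.cos (Real.pi * β / 2) ≠ 0)
include hc

theorem cos_add_cosh_half_pi_mul_I_mul_ne_zero :
    ((Real.cos (Real.pi * β / 2) : ℝ) : ℂ) + cosh ((Real.pi : ℂ) / 2 * (I * β)) ≠ 0 := by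
  rw [half_pi_mul_I_mul, cosh_mul_I, ← ofReal_cos, ← two_mul]
  exact mul_ne_zero two_ne_zero (ofReal_ne_zero.mpr hc)

theorem deriv_fCNK_I_mul :
    deriv (fCNK β) (I * β) = 1 / (Real.cos (Real.pi * β / 2) : ℂ) ^ 4 := by
  rw [fCNK_eq, (hasDerivAt_add_mul_sinh_div_add_cosh
      (cos_add_cosh_half_pi_mul_I_mul_ne_zero hc)).deriv,
    half_pi_mul_I_mul, cosh_mul_I, ← ofReal_cos, Real.tan_eq_sin_div_cos]
  have hsc := Real.sin_sq_add_cos_sq (Real.pi * β / 2)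
  generalize Real.sin (Real.pi * β / 2) = s at hsc ⊢
  generalize Real.cos (Real.pi * β / 2) = c at hc hsc ⊢
  have hcC : (c : ℂ) ≠ 0 := ofReal_ne_zero.mpr hc
  have hscC : (s : ℂ) ^ 2 + (c : ℂ) ^ 2 = 1 := by exact_mod_cast hsc
  push_cast
  field_simp
  linear_combination (8 * ((c : ℂ) ^ 2 + 1)) * hscC

theorem deriv_deriv_fCNK_I_mul :
    deriv (deriv (fCNK β)) (I * β) =
      -(Real.pi : ℂ) * I * (Real.sin (Real.pi * β / 2) : ℂ) ^ 3 /
        (2 * (Real.cos (Real.pi * β / 2) : ℂ) ^ 5) := by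
  rw [fCNK_eq, deriv_deriv_add_mul_sinh_div_add_cosh (cos_add_cosh_half_pi_mul_I_mul_ne_zero hc),
    half_pi_mul_I_mul, cosh_mul_I, sinh_mul_I, ← ofReal_cos, ← ofReal_sin,
    Real.tan_eq_sin_div_cos]
  generalize Real.sin (Real.pi * β / 2) = s
  generalize Real.cos (Real.pi * β / 2) = c at hc ⊢
  have hcC : (c : ℂ) ≠ 0 := ofReal_ne_zero.mpr hc
  have hπ : (Real.pi : ℂ) ≠ 0 := ofReal_ne_zero.mpr Real.pi_ne_zero
  push_cast
  field_simp
  ring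

theorem deriv_deriv_div_deriv_fCNK_I_mul :
    deriv (deriv (fCNK β)) (I * β) / deriv (fCNK β) (I * β) =
      (Real.pi : ℂ) * I * kappaCNK β := by
  rw [deriv_deriv_fCNK_I_mul hc, deriv_fCNK_I_mul hc, kappaCNK]
  generalize Real.sin (Real.pi * β / 2) = s
  generalize Real.cos (Real.pi * β / 2) = c at hc ⊢
  have hcC : (c : ℂ) ≠ 0 := ofReal_ne_zero.mpr hc
  push_cast
  field_simp

theorem cos_sub_kappaCNK_mul_sin :
    Real.cos (Real.pi * β) - kappaCNK β * Real.sin (Real.pi * β) =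
      Real.cos (Real.pi * β / 2) ^ 4 := by
  have hsc := Real.sin_sq_add_cos_sq (Real.pi * β / 2)
  conv_lhs => rw [show Real.pi * β = 2 * (Real.pi * β / 2) by ring]
  rw [Real.cos_two_mul, Real.sin_two_mul, kappaCNK]
  generalize Real.sin (Real.pi * β / 2) = s at hsc ⊢
  generalize Real.cos (Real.pi * β / 2) = c at hc hsc ⊢
  field_simp
  linear_combination (s ^ 2 + 1 - c ^ 2) * hsc

end

theorem statement16 (β : ℝ) (hβ : β ∈ Ioo (0 : ℝ) 1) :
    -- (i) the Helmholtz–Kirchhoff condition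
    (deriv (fCNK β) (Complex.I * β) ≠ 0
      ∧ deriv (deriv (fCNK β)) (Complex.I * β) / deriv (fCNK β) (Complex.I * β) =
          (Real.pi : ℂ) * Complex.I * kappaCNK β)
    -- (ii) the circulation identity
    ∧ (Real.cos (Real.pi * β) - kappaCNK β * Real.sin (Real.pi * β) =
        Real.cos (Real.pi * β / 2) ^ 4
      ∧ 0 < Real.cos (Real.pi * β / 2) ^ 4
      ∧ gammaCNK β = -4 * Real.sin (Real.pi * β) /
          (Real.cos (Real.pi * β) - kappaCNK β * Real.sin (Real.pi * β)))
    -- (iii) the physical altitude of the vortex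
    ∧ ((fCNK β (Complex.I * β)).re = 0
      ∧ (fCNK β (Complex.I * β)).im = β + 4 / Real.pi * Real.tan (Real.pi * β / 2) ^ 3) := by
  have hcos : 0 < Real.cos (Real.pi * β / 2) := Real.cos_pos_of_mem_Ioo
    ⟨by nlinarith [Real.pi_pos, hβ.1], by nlinarith [Real.pi_pos, hβ.2]⟩
  have hc := hcos.ne'
  have hsin : Real.sin (Real.pi * β) =
      2 * Real.sin (Real.pi * β / 2) * Real.cos (Real.pi * β / 2) := by
    rw [← Real.sin_two_mul]
    ring_nf
  refine ⟨⟨?_, deriv_deriv_div_deriv_fCNK_I_mul hc⟩,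
    ⟨cos_sub_kappaCNK_mul_sin hc, pow_pos hcos 4, ?_⟩, ?_, ?_⟩
  · rw [deriv_fCNK_I_mul hc]
    exact one_div_ne_zero (pow_ne_zero 4 (Complex.ofReal_ne_zero.mpr hc))
  · rw [cos_sub_kappaCNK_mul_sin hc, gammaCNK, hsin]
    field_simp
    ring
  · rw [fCNK_I_mul, Complex.re_ofReal_mul, Complex.I_re, mul_zero]
  · rw [fCNK_I_mul, Complex.im_ofReal_mul, Complex.I_im, mul_one]
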